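/- Let α, β0, γ0 be rational numbers with α > 1, γ0 > 0 and β0 = α + γ0, and let (u_n)_{n≥-1} be a nontrivial real solution of (n+α) u_n = (2n+β0) u_{n-1} − (n+γ0) u_{n-2} for all n ≥ 1. If α ≤ γ0 + 1, then (u_n) is a minimal solution if and only if u_0 = u_{-1}. If α > γ0 + 1, then (u_n) is a minimal solution if and only if α u_0 = (γ0 + 1) u_{-1}. -/

import Mathlib

open Filter

/-- `u` solves the second-order recurrence `p n * u n = q n * u (n-1) + r n * u (n-2)`
for all `n ≥ 1`. -/
def IsSol (p q r u : ℤ → ℝ) : Prop :=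
  ∀ n : ℤ, 1 ≤ n → p n * u n = q n * u (n - 1) + r n * u (n - 2)

/-- A sequence (indexed from `-1`) is nontrivial if it is not identically zero. -/
def SeqNontrivial (u : ℤ → ℝ) : Prop :=
  ∃ n : ℤ, -1 ≤ n ∧ u n ≠ 0

/-- Linear independence of two sequences indexed from `-1`. -/
def SeqLinIndep (u v : ℤ → ℝ) : Prop :=
  ∀ c d : ℝ, (∀ n : ℤ, -1 ≤ n → c * u n + d * v n = 0) → c = 0 ∧ d = 0

/-- A nontrivial solution `u` of the recurrence is minimal if there is another solution `v`,
linearly independent from `u`, with `u n / v n → 0`. -/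
def IsMinimal (p q r u : ℤ → ℝ) : Prop :=
  IsSol p q r u ∧ SeqNontrivial u ∧
    ∃ v : ℤ → ℝ, IsSol p q r v ∧ SeqLinIndep u v ∧
      Tendsto (fun n : ℕ => u (n : ℤ) / v (n : ℤ)) atTop (nhds 0)

/-!
The constant sequences solve the recurrence, and the increments `u n - u (n-1)` obey the
first-order recurrence `(n+α) x n = (n+γ) x (n-1)`. Hence every solution is
`u (-1) + (u 0 - u (-1)) S n` with `S n = ∑_{k ≤ n} (1+γ)ₖ/(1+α)ₖ`, and telescoping gives
`(α - γ - 1) S n + (n+1+γ) (1+γ)ₙ/(1+α)ₙ = α`.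

As `S` is strictly increasing, a nontrivial solution vanishes at most once for `n ≥ 0`. So if for
some scale `w` every solution has `v n / w n → ℓ v`, with `ℓ` not identically zero on solutions,
then `u` is minimal iff `ℓ u = 0`: if `ℓ u ≠ 0`, eventually `u / w = (u / v) (v / w)`, which rules
out `u / v → 0`; if `ℓ u = 0`, any solution `v` with `ℓ v ≠ 0` witnesses minimality.

If `α ≤ γ + 1`, the `k`-th term of `S` is at least `(1+γ)/(k+1+γ)`, so `S` diverges; take `w = S`
and `ℓ u = u 0 - u (-1)`. If `α > γ + 1`, the factor `(n+1+γ)(1+γ)ₙ/(1+α)ₙ` is multiplied by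
`1 - (α-γ-1)/(n+1+α) ≤ exp (-(α-γ-1)/(n+1+α))` at each step, so it tends to `0` and
`S n → α/(α-γ-1)`; take `w = 1` and `ℓ u = lim u = (α u 0 - (γ+1) u (-1))/(α-γ-1)`.
-/

open Finset Topology

section Recurrence

variable {p q r : ℤ → ℝ}

theorem IsSol.linearCombination {u v : ℤ → ℝ} (hu : IsSol p q r u) (hv : IsSol p q r v)
    (c d : ℝ) : IsSol p q r (fun n => c * u n + d * v n) := by
  intro n hn
  linear_combination c * hu n hn + d * hv n hn

theorem isSol_const (h : ∀ n, p n = q n + r n) (c : ℝ) : IsSol p q r (fun _ => c) := by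
  intro n _
  rw [h]
  ring

theorem IsSol.eq_of_eq_neg_one_of_eq_zero {u v : ℤ → ℝ} (hp : ∀ n, 1 ≤ n → p n ≠ 0)
    (hu : IsSol p q r u) (hv : IsSol p q r v) (h₁ : u (-1) = v (-1)) (h₀ : u 0 = v 0)
    {n : ℤ} (hn : -1 ≤ n) : u n = v n := by
  have hpair : ∀ m : ℕ, u (m - 1) = v (m - 1) ∧ u m = v m := by
    intro m
    induction m with
    | zero => simpa using ⟨h₁, h₀⟩
    | succ m ih =>
      have hm : (1 : ℤ) ≤ m + 1 := by omega
      have hsu := hu _ hm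
      have hsv := hv _ hm
      simp only [add_sub_cancel_right, show (m : ℤ) + 1 - 2 = m - 1 by ring, ih.1, ih.2]
        at hsu hsv
      push_cast
      exact ⟨by simpa using ih.2, mul_left_cancel₀ (hp _ hm) (hsu.trans hsv.symm)⟩
  simpa [show ((n + 1).toNat : ℤ) = n + 1 by omega] using (hpair (n + 1).toNat).1

theorem SeqLinIndep.seqNontrivial_right {u v : ℤ → ℝ} (h : SeqLinIndep u v) :
    SeqNontrivial v := by
  by_contra hv
  simp only [SeqNontrivial, not_exists, not_and, not_not] at hv
  exact one_ne_zero (h 0 1 fun n hn => by simp [hv n hn]).2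

theorem not_tendsto_div_nhds_zero {u v w : ℕ → ℝ} {x y : ℝ}
    (hu : Tendsto (fun n => u n / w n) atTop (𝓝 x)) (hx : x ≠ 0)
    (hv : Tendsto (fun n => v n / w n) atTop (𝓝 y)) (hv₀ : ∀ᶠ n in atTop, v n ≠ 0) :
    ¬Tendsto (fun n => u n / v n) atTop (𝓝 0) := by
  intro h
  have hprod : Tendsto (fun n => u n / v n * (v n / w n)) atTop (𝓝 0) := by
    simpa using h.mul hv
  refine hx (tendsto_nhds_unique (hu.congr' ?_) hprod)
  filter_upwards [hv₀] with n hn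
  rw [div_mul_div_cancel₀ hn]

theorem tendsto_div_nhds_zero {u v w : ℕ → ℝ} {y : ℝ}
    (hu : Tendsto (fun n => u n / w n) atTop (𝓝 0))
    (hv : Tendsto (fun n => v n / w n) atTop (𝓝 y)) (hy : y ≠ 0) :
    Tendsto (fun n => u n / v n) atTop (𝓝 0) := by
  have hquot := hu.div hv hy
  rw [zero_div] at hquot
  refine hquot.congr' ?_
  filter_upwards [hv.eventually_ne hy] with n hn
  have hw : w n ≠ 0 := fun h => hn (by simp [h])
  exact div_div_div_cancel_right₀ hw _ _

theorem seqLinIndep_of_tendsto_div {u v : ℤ → ℝ} {w : ℕ → ℝ} {y : ℝ}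
    (hu : Tendsto (fun n : ℕ => u n / w n) atTop (𝓝 0))
    (hv : Tendsto (fun n : ℕ => v n / w n) atTop (𝓝 y)) (hy : y ≠ 0) (hnt : SeqNontrivial u) :
    SeqLinIndep u v := by
  intro c d h
  have hlim := (hu.const_mul c).add (hv.const_mul d)
  have hzero : (fun n : ℕ => c * (u n / w n) + d * (v n / w n)) = fun _ => 0 := by
    funext n
    rw [mul_div_assoc', mul_div_assoc', ← add_div, h n (by omega), zero_div]
  rw [hzero, mul_zero, zero_add] at hlim
  have hd : d = 0 :=
    (mul_eq_zero.mp (tendsto_nhds_unique tendsto_const_nhds hlim).symm).resolve_right hy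
  obtain ⟨m, hm, hum⟩ := hnt
  refine ⟨(mul_eq_zero.mp ?_).resolve_right hum, hd⟩
  simpa [hd] using h m hm

theorem isMinimal_iff_of_tendsto_div {u v₀ : ℤ → ℝ} (w : ℕ → ℝ) (ℓ : (ℤ → ℝ) → ℝ)
    (hℓ : ∀ v, IsSol p q r v → Tendsto (fun n : ℕ => v n / w n) atTop (𝓝 (ℓ v)))
    (hne : ∀ v, IsSol p q r v → SeqNontrivial v → ∀ᶠ n : ℕ in atTop, v n ≠ 0)
    (hv₀ : IsSol p q r v₀) (hℓv₀ : ℓ v₀ ≠ 0) (hu : IsSol p q r u) (hnt : SeqNontrivial u) :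
    IsMinimal p q r u ↔ ℓ u = 0 := by
  constructor
  · rintro ⟨-, -, v, hv, hind, hlim⟩
    by_contra hℓu
    exact not_tendsto_div_nhds_zero (hℓ u hu) hℓu (hℓ v hv)
      (hne v hv hind.seqNontrivial_right) hlim
  · intro hℓu
    have hu₀ := hℓu ▸ hℓ u hu
    exact ⟨hu, hnt, v₀, hv₀, seqLinIndep_of_tendsto_div hu₀ (hℓ v₀ hv₀) hℓv₀ hnt,
      tendsto_div_nhds_zero hu₀ (hℓ v₀ hv₀) hℓv₀⟩

end Recurrence

-- `(1 + g)ₙ / (1 + a)ₙ` in rising-factorial notation.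
noncomputable def pochhammerRatio (a g : ℝ) (n : ℕ) : ℝ :=
  ∏ j ∈ range n, ((j : ℝ) + 1 + g) / ((j : ℝ) + 1 + a)

noncomputable def pochhammerSum (a g : ℝ) (n : ℤ) : ℝ :=
  ∑ k ∈ range (n + 1).toNat, pochhammerRatio a g k

section Pochhammer

variable {a g : ℝ}

theorem pochhammerRatio_zero : pochhammerRatio a g 0 = 1 := by
  simp [pochhammerRatio]

theorem pochhammerRatio_pos (ha : 0 ≤ a) (hg : 0 ≤ g) (n : ℕ) : 0 < pochhammerRatio a g n :=
  prod_pos fun _ _ => by positivity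

theorem pochhammerRatio_succ_mul (ha : 0 ≤ a) (n : ℕ) :
    ((n : ℝ) + 1 + a) * pochhammerRatio a g (n + 1) =
      ((n : ℝ) + 1 + g) * pochhammerRatio a g n := by
  rw [pochhammerRatio, prod_range_succ, ← pochhammerRatio]
  field_simp

theorem pochhammerSum_natCast (n : ℕ) :
    pochhammerSum a g n = ∑ k ∈ range (n + 1), pochhammerRatio a g k := by
  simp [pochhammerSum, show ((n : ℤ) + 1).toNat = n + 1 by omega]

theorem pochhammerSum_neg_one : pochhammerSum a g (-1) = 0 := by
  simp [pochhammerSum]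

theorem pochhammerSum_zero : pochhammerSum a g 0 = 1 := by
  simp [pochhammerSum, pochhammerRatio_zero]

theorem pochhammerSum_natCast_sub_one (n : ℕ) :
    pochhammerSum a g ((n : ℤ) - 1) = pochhammerSum a g n - pochhammerRatio a g n := by
  simp [pochhammerSum, sum_range_succ, show ((n : ℤ) + 1).toNat = n + 1 by omega]

theorem pochhammerSum_natCast_succ (n : ℕ) :
    pochhammerSum a g (n + 1 : ℕ) = pochhammerSum a g n + pochhammerRatio a g (n + 1) := by
  simp only [pochhammerSum_natCast, sum_range_succ _ (n + 1)]

theorem pochhammerSum_natCast_pos (ha : 0 ≤ a) (hg : 0 ≤ g) (n : ℕ) :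
    0 < pochhammerSum a g n := by
  rw [pochhammerSum_natCast]
  exact sum_pos (fun k _ => pochhammerRatio_pos ha hg k) nonempty_range_add_one

theorem strictMono_pochhammerSum (ha : 0 ≤ a) (hg : 0 ≤ g) :
    StrictMono fun n : ℕ => pochhammerSum a g n :=
  strictMono_nat_of_lt_succ fun n => by
    simp only [pochhammerSum_natCast_succ n]
    linarith [pochhammerRatio_pos ha hg (n + 1)]

theorem isSol_pochhammerSum (ha : 0 ≤ a) :
    IsSol (fun n => (n : ℝ) + a) (fun n => 2 * (n : ℝ) + (a + g)) (fun n => -((n : ℝ) + g))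
      (pochhammerSum a g) := by
  intro n hn
  obtain ⟨m, rfl⟩ : ∃ m : ℕ, n = m + 1 := ⟨(n - 1).toNat, by omega⟩
  have hsucc := pochhammerSum_natCast_sub_one (a := a) (g := g) (m + 1)
  have hpred := pochhammerSum_natCast_sub_one (a := a) (g := g) m
  push_cast at hsucc ⊢
  rw [add_sub_cancel_right] at hsucc
  rw [show (m : ℤ) + 1 - 2 = m - 1 by ring, add_sub_cancel_right, hpred]
  linear_combination pochhammerRatio_succ_mul (g := g) ha m - hsucc * ((m : ℝ) + 1 + a)

end Pochhammer

section Solutions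

variable {a g : ℝ} {u : ℤ → ℝ}

theorem IsSol.eq_add_mul_pochhammerSum (ha : 0 ≤ a)
    (hu : IsSol (fun n => (n : ℝ) + a) (fun n => 2 * (n : ℝ) + (a + g))
      (fun n => -((n : ℝ) + g)) u) {n : ℤ} (hn : -1 ≤ n) :
    u n = u (-1) + (u 0 - u (-1)) * pochhammerSum a g n := by
  have hsol := (isSol_const (fun n => by ring) 1).linearCombination
    (isSol_pochhammerSum (g := g) ha) (u (-1)) (u 0 - u (-1))
  have hp : ∀ n : ℤ, 1 ≤ n → (n : ℝ) + a ≠ 0 := fun n hn => by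
    have : (1 : ℝ) ≤ n := by exact_mod_cast hn
    positivity
  simpa using hu.eq_of_eq_neg_one_of_eq_zero hp hsol (by simp [pochhammerSum_neg_one])
    (by simp [pochhammerSum_zero]) hn

theorem IsSol.eventually_ne_zero (ha : 0 ≤ a) (hg : 0 ≤ g)
    (hu : IsSol (fun n => (n : ℝ) + a) (fun n => 2 * (n : ℝ) + (a + g))
      (fun n => -((n : ℝ) + g)) u) (hnt : SeqNontrivial u) :
    ∀ᶠ n : ℕ in atTop, u n ≠ 0 := by
  have hform := fun n : ℤ => hu.eq_add_mul_pochhammerSum ha (n := n)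
  by_cases hd : u 0 - u (-1) = 0
  · obtain ⟨m, hm, hum⟩ := hnt
    refine Eventually.of_forall fun n => ?_
    rw [hform n (by omega), hd, zero_mul, add_zero]
    simpa [hform m hm, hd] using hum
  · have hinj : Function.Injective fun n : ℕ => u n := fun m n hmn => by
      simp only [hform m (by omega), hform n (by omega), add_right_inj,
        mul_right_inj' hd] at hmn
      exact (strictMono_pochhammerSum ha hg).injective hmn
    rw [← Nat.cofinite_eq_atTop]
    exact hinj.tendsto_cofinite.eventually (eventually_cofinite_ne 0)

end Solutions

theorem tendsto_sum_range_inv_add_atTop {c : ℝ} (hc : 0 ≤ c) :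
    Tendsto (fun n : ℕ => ∑ k ∈ range n, ((k : ℝ) + 1 + c)⁻¹) atTop atTop := by
  refine tendsto_atTop_mono (fun n => ?_)
    (Real.tendsto_sum_range_one_div_nat_succ_atTop.const_mul_atTop
      (inv_pos.2 (by positivity : (0 : ℝ) < 1 + c)))
  rw [mul_sum]
  gcongr with k
  rw [← div_eq_inv_mul, div_div, one_div]
  gcongr
  nlinarith [(k.cast_nonneg : (0 : ℝ) ≤ k)]

section Divergent

variable {a g : ℝ} (ha : 0 ≤ a) (hg : 0 ≤ g) (hag : a ≤ g + 1)
include ha hg hag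

theorem one_add_le_mul_pochhammerRatio (n : ℕ) :
    1 + g ≤ ((n : ℝ) + 1 + g) * pochhammerRatio a g n := by
  induction n with
  | zero => simp [pochhammerRatio_zero]
  | succ n ih =>
    have hP := pochhammerRatio_pos ha hg (n + 1)
    calc 1 + g ≤ ((n : ℝ) + 1 + g) * pochhammerRatio a g n := ih
      _ = ((n : ℝ) + 1 + a) * pochhammerRatio a g (n + 1) := (pochhammerRatio_succ_mul ha n).symm
      _ ≤ (((n + 1 : ℕ) : ℝ) + 1 + g) * pochhammerRatio a g (n + 1) := by
        refine mul_le_mul_of_nonneg_right ?_ hP.le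
        push_cast
        linarith

theorem tendsto_pochhammerSum_atTop : Tendsto (fun n : ℕ => pochhammerSum a g n) atTop atTop := by
  refine tendsto_atTop_mono (fun n => ?_)
    ((tendsto_sum_range_inv_add_atTop hg).comp (tendsto_add_atTop_nat 1))
  rw [Function.comp_apply, pochhammerSum_natCast]
  gcongr with k
  rw [inv_eq_one_div, div_le_iff₀ (by positivity)]
  linarith [one_add_le_mul_pochhammerRatio ha hg hag k]

theorem isMinimal_iff_of_le {u : ℤ → ℝ}
    (hu : IsSol (fun n => (n : ℝ) + a) (fun n => 2 * (n : ℝ) + (a + g))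
      (fun n => -((n : ℝ) + g)) u) (hnt : SeqNontrivial u) :
    IsMinimal (fun n => (n : ℝ) + a) (fun n => 2 * (n : ℝ) + (a + g))
      (fun n => -((n : ℝ) + g)) u ↔ u 0 = u (-1) := by
  rw [← sub_eq_zero]
  refine isMinimal_iff_of_tendsto_div (fun n => pochhammerSum a g n) (fun v => v 0 - v (-1))
    (fun v hv => ?_) (fun v hv => hv.eventually_ne_zero ha hg) (isSol_pochhammerSum ha)
    (by simp [pochhammerSum_zero, pochhammerSum_neg_one]) hu hnt
  have hlim := (tendsto_const_nhds (x := v (-1)).div_atTop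
    (tendsto_pochhammerSum_atTop ha hg hag)).add_const (v 0 - v (-1))
  rw [zero_add] at hlim
  refine hlim.congr fun n => ?_
  rw [hv.eq_add_mul_pochhammerSum ha (n := n) (by omega), add_div,
    mul_div_cancel_right₀ _ (pochhammerSum_natCast_pos ha hg n).ne']

end Divergent

section Convergent

variable {a g : ℝ}

theorem sub_mul_pochhammerSum_add (ha : 0 ≤ a) (n : ℕ) :
    (a - g - 1) * pochhammerSum a g n + ((n : ℝ) + 1 + g) * pochhammerRatio a g n = a := by
  induction n with
  | zero => simp [pochhammerSum_zero, pochhammerRatio_zero]; ring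
  | succ n ih =>
    rw [pochhammerSum_natCast_succ]
    push_cast
    linear_combination ih + pochhammerRatio_succ_mul (g := g) ha n

variable (hg : 0 ≤ g) (hga : g + 1 < a)
include hg hga

theorem tendsto_mul_pochhammerRatio_zero :
    Tendsto (fun n : ℕ => ((n : ℝ) + 1 + g) * pochhammerRatio a g n) atTop (𝓝 0) := by
  have ha : 0 ≤ a := by linarith
  set ε := a - g - 1
  have hbound : ∀ n : ℕ, ((n : ℝ) + 1 + g) * pochhammerRatio a g n ≤
      (1 + g) * Real.exp (-(ε * ∑ k ∈ range n, ((k : ℝ) + 1 + a)⁻¹)) := by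
    intro n
    induction n with
    | zero => simp [pochhammerRatio_zero]
    | succ n ih =>
      have hpos : (0 : ℝ) < n + 1 + a := by positivity
      have hstep : (((n + 1 : ℕ) : ℝ) + 1 + g) * pochhammerRatio a g (n + 1) =
          (1 - ε * ((n : ℝ) + 1 + a)⁻¹) * (((n : ℝ) + 1 + g) * pochhammerRatio a g n) := by
        rw [← pochhammerRatio_succ_mul ha n]
        field_simp
        push_cast
        ring
      have hfac : 1 - ε * ((n : ℝ) + 1 + a)⁻¹ ≤ Real.exp (-(ε * ((n : ℝ) + 1 + a)⁻¹)) := by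
        linarith [Real.add_one_le_exp (-(ε * ((n : ℝ) + 1 + a)⁻¹))]
      have hQ := mul_pos (by positivity : (0 : ℝ) < n + 1 + g) (pochhammerRatio_pos ha hg n)
      calc _ = (1 - ε * ((n : ℝ) + 1 + a)⁻¹) * (((n : ℝ) + 1 + g) * pochhammerRatio a g n) :=
            hstep
        _ ≤ Real.exp (-(ε * ((n : ℝ) + 1 + a)⁻¹)) *
            ((1 + g) * Real.exp (-(ε * ∑ k ∈ range n, ((k : ℝ) + 1 + a)⁻¹))) :=
          mul_le_mul hfac ih hQ.le (Real.exp_pos _).le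
        _ = _ := by rw [sum_range_succ, mul_add, neg_add, Real.exp_add]; ring
  have hexp := (Real.tendsto_exp_atBot.comp (tendsto_neg_atTop_atBot.comp
    ((tendsto_sum_range_inv_add_atTop ha).const_mul_atTop (by linarith : 0 < ε)))).const_mul
      (1 + g)
  rw [mul_zero] at hexp
  exact squeeze_zero (fun n => (mul_pos (by positivity) (pochhammerRatio_pos ha hg n)).le)
    hbound hexp

theorem tendsto_pochhammerSum :
    Tendsto (fun n : ℕ => pochhammerSum a g n) atTop (𝓝 (a / (a - g - 1))) := by
  have hlim := (tendsto_const_nhds (x := a)).sub (tendsto_mul_pochhammerRatio_zero hg hga)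
    |>.div_const (a - g - 1)
  rw [sub_zero] at hlim
  refine hlim.congr fun n => ?_
  rw [div_eq_iff (by linarith)]
  linear_combination -sub_mul_pochhammerSum_add (g := g) (by linarith) n

theorem isMinimal_iff_of_lt {u : ℤ → ℝ}
    (hu : IsSol (fun n => (n : ℝ) + a) (fun n => 2 * (n : ℝ) + (a + g))
      (fun n => -((n : ℝ) + g)) u) (hnt : SeqNontrivial u) :
    IsMinimal (fun n => (n : ℝ) + a) (fun n => 2 * (n : ℝ) + (a + g))
      (fun n => -((n : ℝ) + g)) u ↔ a * u 0 = (g + 1) * u (-1) := by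
  have ha : 0 ≤ a := by linarith
  rw [isMinimal_iff_of_tendsto_div (fun _ => 1)
    (fun v => v (-1) + (v 0 - v (-1)) * (a / (a - g - 1)))
    (fun v hv => ?_) (fun v hv => hv.eventually_ne_zero ha hg) (isSol_const (fun n => by ring) 1)
    (by simp) hu hnt]
  · rw [← mul_div_assoc, add_div' _ _ _ (by linarith), div_eq_zero_iff, or_iff_left (by linarith)]
    constructor <;> intro h <;> linarith
  · simp only [div_one]
    refine (((tendsto_pochhammerSum hg hga).const_mul _).const_add _).congr fun n => ?_
    exact (hv.eq_add_mul_pochhammerSum ha (n := n) (by omega)).symm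

end Convergent

/-- Let `α, β0, γ0 ∈ ℚ` with `α > 1`, `γ0 > 0` and `β0 = α + γ0`, and let `u`
be a nontrivial real solution of `(n+α) u n = (2n+β0) u (n-1) − (n+γ0) u (n-2)` for `n ≥ 1`.
If `α ≤ γ0 + 1`, then `u` is minimal iff `u 0 = u (-1)`; if `α > γ0 + 1`, then `u` is minimal
iff `α * u 0 = (γ0 + 1) * u (-1)`. -/
theorem stmt_9 (α β0 γ0 : ℚ) (hα : 1 < α) (hγ : 0 < γ0) (hβ : β0 = α + γ0) (u : ℤ → ℝ)
    (hu : IsSol (fun n => (n : ℝ) + (α : ℝ)) (fun n => 2 * (n : ℝ) + (β0 : ℝ))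
      (fun n => -((n : ℝ) + (γ0 : ℝ))) u)
    (hnt : SeqNontrivial u) :
    (α ≤ γ0 + 1 →
      (IsMinimal (fun n => (n : ℝ) + (α : ℝ)) (fun n => 2 * (n : ℝ) + (β0 : ℝ))
          (fun n => -((n : ℝ) + (γ0 : ℝ))) u ↔ u 0 = u (-1))) ∧
    (γ0 + 1 < α →
      (IsMinimal (fun n => (n : ℝ) + (α : ℝ)) (fun n => 2 * (n : ℝ) + (β0 : ℝ))
          (fun n => -((n : ℝ) + (γ0 : ℝ))) u ↔
        (α : ℝ) * u 0 = ((γ0 : ℝ) + 1) * u (-1))) := by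
  subst hβ
  have ha : (0 : ℝ) ≤ α := by exact_mod_cast (zero_lt_one.trans hα).le
  have hg : (0 : ℝ) ≤ γ0 := by exact_mod_cast hγ.le
  simp only [Rat.cast_add] at hu ⊢
  refine ⟨fun hle => isMinimal_iff_of_le ha hg (by exact_mod_cast hle) hu hnt,
    fun hlt => isMinimal_iff_of_lt hg (by exact_mod_cast hlt) hu hnt⟩
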